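/- arXiv:2209.09670 — 2 statements merged into one kernel-verified Lean document; each statement's English description precedes it below -/
import Mathlib

section
/- Let (M,d) be a metric space, let X ⊆ M be a finite set, let ε > 0 and D ≥ 0, and let k be a positive integer. Suppose B_1, …, B_k is a partition of X into pairwise disjoint blocks such that d(p,q) ≤ 2D for all p,q lying in the same block, and suppose A ⊆ X is an ε-exemplar set for X (i.e., for every x ∈ X there exists a ∈ A with d(x,a) ≤ ε). Set E_j = B_j ∩ A for each j. Then there exists a partition C_1, …, C_k of X into pairwise disjoint sets (some possibly empty) such that: (i) for each j and all x,y ∈ C_j, d(x,y) ≤ 2(D + ε); (ii) for each j, E_j ⊆ C_j, and the sets E_1, …, E_k are pairwise disjoint; and (iii) for every x ∈ X there exists a ∈ A such that x and a lie in the same set C_j and d(x,a) ≤ ε. -/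
/-- Structural correctness of the SCCE approximation algorithm: from a `k`-block partition
of `X` with pairwise distances at most `2*D` within blocks and an `ε`-exemplar set `A` for
`X`, one can repartition `X` into `k` clusters of diameter at most `2*(D + ε)` such that
each cluster `C j` contains the exemplar set `E j = B j ∩ A`, the exemplar sets are
pairwise disjoint, and every instance has an exemplar from `A` in its own cluster. -/
theorem scce_structural_correctness {M : Type*} [MetricSpace M]
    (X : Set M) (hXfin : X.Finite) (ε D : ℝ) (hε : 0 < ε) (hD : 0 ≤ D)
    (k : ℕ) (hk : 0 < k)
    (B : Fin k → Set M)
    (hBdisj : ∀ i j, i ≠ j → Disjoint (B i) (B j))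
    (hBunion : (⋃ j, B j) = X)
    (hBdiam : ∀ j, ∀ p ∈ B j, ∀ q ∈ B j, dist p q ≤ 2 * D)
    (A : Set M) (hAX : A ⊆ X)
    (hA : ∀ x ∈ X, ∃ a ∈ A, dist x a ≤ ε) :
    ∃ C : Fin k → Set M,
      (∀ i j, i ≠ j → Disjoint (C i) (C j)) ∧
      (⋃ j, C j) = X ∧
      (∀ j, ∀ x ∈ C j, ∀ y ∈ C j, dist x y ≤ 2 * (D + ε)) ∧
      (∀ j, B j ∩ A ⊆ C j) ∧
      (∀ i j, i ≠ j → Disjoint (B i ∩ A) (B j ∩ A)) ∧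
      (∀ x ∈ X, ∃ a ∈ A, ∃ j, x ∈ C j ∧ a ∈ C j ∧ dist x a ≤ ε) := by
  classical
  -- exemplar choice: a point in A chooses itself
  set g : M → M := fun x => if x ∈ A then x else if h : x ∈ X then (hA x h).choose else x
    with hg
  have hgA : ∀ x ∈ X, g x ∈ A := by
    intro x hx
    by_cases hxA : x ∈ A
    · simpa [hg, hxA]
    · simp only [hg, hxA, if_false, dif_pos hx]
      exact (hA x hx).choose_spec.1
  have hgdist : ∀ x ∈ X, dist x (g x) ≤ ε := by
    intro x hx
    by_cases hxA : x ∈ A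
    · simp [hg, hxA, le_of_lt hε]
    · simp only [hg, hxA, if_false, dif_pos hx]
      exact (hA x hx).choose_spec.2
  have hgid : ∀ x ∈ A, g x = x := by intro x hx; simp [hg, hx]
  -- block index
  set f : M → Fin k := fun y => if h : ∃ j, y ∈ B j then h.choose else ⟨0, hk⟩ with hf
  have hfmem : ∀ y ∈ X, y ∈ B (f y) := by
    intro y hy
    have h : ∃ j, y ∈ B j := by
      rw [← hBunion] at hy; simpa using hy
    simp only [hf, dif_pos h]
    exact h.choose_spec
  have hfuniq : ∀ j, ∀ y ∈ B j, f y = j := by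
    intro j y hy
    have hyX : y ∈ X := by rw [← hBunion]; exact Set.mem_iUnion.2 ⟨j, hy⟩
    by_contra hne
    exact (hBdisj _ _ hne).ne_of_mem (hfmem y hyX) hy rfl
  refine ⟨fun j => {x ∈ X | f (g x) = j}, ?_, ?_, ?_, ?_, ?_, ?_⟩
  · intro i j hij
    rw [Set.disjoint_left]
    rintro x ⟨-, hi⟩ ⟨-, hj⟩
    exact hij (hi ▸ hj ▸ rfl)
  · ext x
    simp only [Set.mem_iUnion, Set.mem_setOf_eq]
    exact ⟨fun ⟨j, hx, _⟩ => hx, fun hx => ⟨f (g x), hx, rfl⟩⟩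
  · rintro j x ⟨hxX, hxj⟩ y ⟨hyX, hyj⟩
    have h1 : dist (g x) (g y) ≤ 2 * D := by
      refine hBdiam j _ ?_ _ ?_
      · rw [← hxj]; exact hfmem _ (hAX (hgA x hxX))
      · rw [← hyj]; exact hfmem _ (hAX (hgA y hyX))
    calc dist x y ≤ dist x (g x) + dist (g x) (g y) + dist (g y) y :=
          dist_triangle4 x (g x) (g y) y
      _ ≤ ε + 2 * D + ε := by
          gcongr
          · exact hgdist x hxX
          · rw [dist_comm]; exact hgdist y hyX
      _ = 2 * (D + ε) := by ring
  · rintro j x ⟨hxB, hxA⟩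
    refine ⟨hAX hxA, ?_⟩
    rw [hgid x hxA]
    exact hfuniq j x hxB
  · intro i j hij
    exact Set.disjoint_of_subset Set.inter_subset_left Set.inter_subset_left (hBdisj i j hij)
  · intro x hx
    refine ⟨g x, hgA x hx, f (g x), ⟨hx, rfl⟩, ⟨hAX (hgA x hx), ?_⟩, hgdist x hx⟩
    rw [hgid _ (hgA x hx)]
end

section
/- Let (M,d) be a metric space, let X ⊆ M be a finite set, let ε > 0 and D ≥ 0, and let k be a positive integer. Suppose B_1, …, B_k is a partition of X into pairwise disjoint blocks such that d(p,q) ≤ 2D for all p,q lying in the same block, and let A ⊆ X be an arbitrary subset (not necessarily covering all of X). Let Cov = { x ∈ X : there exists a ∈ A with d(x,a) ≤ ε } and set E_j = B_j ∩ A for each j. Then there exist pairwise disjoint sets C_1, …, C_k ⊆ X whose union equals Cov such that: (i) for each j and all x,y ∈ C_j, d(x,y) ≤ 2(D + ε); (ii) for each j, E_j ⊆ C_j, and the sets E_1, …, E_k are pairwise disjoint; and (iii) for every x in C_j there exists a ∈ E_j' for some j' with x ∈ C_{j'} and d(x,a) ≤ ε; i.e., every covered instance has an exemplar from A in its own cluster.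 -/
/-- Structural correctness of the SCCRB approximation algorithm: from a `k`-block partition
of `X` with pairwise distances at most `2*D` within blocks and an arbitrary subset `A ⊆ X`
of exemplars, one can form `k` pairwise disjoint clusters whose union is exactly the set
`Cov` of instances within `ε` of `A`, each of diameter at most `2*(D + ε)`, with
`E j = B j ∩ A ⊆ C j`, pairwise disjoint exemplar sets, and every covered instance having
an exemplar from `A` in its own cluster. -/
theorem sccrb_structural_correctness {M : Type*} [MetricSpace M]
    (X : Set M) (hXfin : X.Finite) (ε D : ℝ) (hε : 0 < ε) (hD : 0 ≤ D)
    (k : ℕ) (hk : 0 < k)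
    (B : Fin k → Set M)
    (hBdisj : ∀ i j, i ≠ j → Disjoint (B i) (B j))
    (hBunion : (⋃ j, B j) = X)
    (hBdiam : ∀ j, ∀ p ∈ B j, ∀ q ∈ B j, dist p q ≤ 2 * D)
    (A : Set M) (hAX : A ⊆ X) :
    ∃ C : Fin k → Set M,
      (∀ j, C j ⊆ X) ∧
      (∀ i j, i ≠ j → Disjoint (C i) (C j)) ∧
      (⋃ j, C j) = {x ∈ X | ∃ a ∈ A, dist x a ≤ ε} ∧
      (∀ j, ∀ x ∈ C j, ∀ y ∈ C j, dist x y ≤ 2 * (D + ε)) ∧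
      (∀ j, B j ∩ A ⊆ C j) ∧
      (∀ i j, i ≠ j → Disjoint (B i ∩ A) (B j ∩ A)) ∧
      (∀ j, ∀ x ∈ C j, ∃ j', ∃ a ∈ B j' ∩ A, x ∈ C j' ∧ dist x a ≤ ε) := by
  classical
  -- exemplar choice function
  set f : M → M := fun x =>
    if x ∈ A then x
    else if h : ∃ a ∈ A, dist x a ≤ ε then h.choose else x with hf
  have hfA : ∀ x, (∃ a ∈ A, dist x a ≤ ε) → f x ∈ A ∧ dist x (f x) ≤ ε := by
    intro x hx
    by_cases hxA : x ∈ A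
    · simp [hf, hxA, dist_self, le_of_lt hε]
    · simp only [hf, hxA, if_false, dif_pos hx]
      exact ⟨hx.choose_spec.1, hx.choose_spec.2⟩
  have hfid : ∀ x ∈ A, f x = x := by intro x hx; simp [hf, hx]
  -- block index function
  have hblock : ∀ x, (∃ a ∈ A, dist x a ≤ ε) → ∃ j, f x ∈ B j := by
    intro x hx
    have : f x ∈ X := hAX (hfA x hx).1
    rw [← hBunion] at this
    exact Set.mem_iUnion.mp this
  set g : M → Fin k := fun x =>
    if h : ∃ a ∈ A, dist x a ≤ ε then (hblock x h).choose else ⟨0, hk⟩ with hg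
  have hgmem : ∀ x, (h : ∃ a ∈ A, dist x a ≤ ε) → f x ∈ B (g x) := by
    intro x h
    simp only [hg, dif_pos h]
    exact (hblock x h).choose_spec
  refine ⟨fun j => {x ∈ X | (∃ a ∈ A, dist x a ≤ ε) ∧ g x = j}, ?_, ?_, ?_, ?_, ?_, ?_, ?_⟩
  · intro j x hx; exact hx.1
  · intro i j hij
    rw [Set.disjoint_left]
    rintro x ⟨_, _, hgi⟩ ⟨_, _, hgj⟩
    exact hij (hgi ▸ hgj ▸ rfl)
  · ext x
    simp only [Set.mem_iUnion, Set.mem_setOf_eq]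
    constructor
    · rintro ⟨j, hX, hcov, _⟩; exact ⟨hX, hcov⟩
    · rintro ⟨hX, hcov⟩; exact ⟨g x, hX, hcov, rfl⟩
  · rintro j x ⟨hxX, hxcov, hgx⟩ y ⟨hyX, hycov, hgy⟩
    have hfx := hfA x hxcov
    have hfy := hfA y hycov
    have h1 : dist (f x) (f y) ≤ 2 * D := by
      have := hgmem x hxcov
      have := hgmem y hycov
      exact hBdiam j (f x) (hgx ▸ hgmem x hxcov) (f y) (hgy ▸ hgmem y hycov)
    calc dist x y ≤ dist x (f x) + dist (f x) (f y) + dist (f y) y :=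
          dist_triangle4 x (f x) (f y) y
      _ ≤ ε + 2 * D + ε := by
          gcongr
          · exact hfx.2
          · rw [dist_comm]; exact hfy.2
      _ = 2 * (D + ε) := by ring
  · rintro j x ⟨hxB, hxA⟩
    have hcov : ∃ a ∈ A, dist x a ≤ ε := ⟨x, hxA, by simp [le_of_lt hε]⟩
    refine ⟨hAX hxA, hcov, ?_⟩
    have hmem := hgmem x hcov
    rw [hfid x hxA] at hmem
    by_contra hne
    exact (hBdisj _ _ hne).ne_of_mem hmem hxB rfl
  · intro i j hij
    exact Set.disjoint_of_subset (Set.inter_subset_left) (Set.inter_subset_left) (hBdisj i j hij)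
  · rintro j x ⟨hxX, hxcov, hgx⟩
    exact ⟨j, f x, ⟨hgx ▸ hgmem x hxcov, (hfA x hxcov).1⟩, ⟨hxX, hxcov, hgx⟩, (hfA x hxcov).2⟩
end
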